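/- (Abel-transformation estimate, inequality (5)) Let 1 ≤ p < ∞ be real, let n < N be positive integers, and let a_1, …, a_N be nonnegative reals. Set A_ν = ∑_{k=1}^{ν} (k a_k)^p for 1 ≤ ν ≤ N. Then (1/(n+1)^p) ∑_{ν=1}^{n} (ν a_ν)^p + ∑_{ν=n+1}^{N} a_ν^p ≤ p ∑_{ν=n}^{N} ν^{−(p+1)} A_ν + N^{−p} A_N. -/

import Mathlib

/-!
Write `b ν = (ν a_ν)^p`, so that `a_ν^p = ν^(-p) b_ν` and `A` is the sequence of partial sums of `b`.
Summation by parts turns `∑_{ν=n+1}^{N} ν^(-p) b_ν` into `N^(-p) A_N - (n+1)^(-p) A_n` plus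
`∑_{ν=n+1}^{N-1} (ν^(-p) - (ν+1)^(-p)) A_ν`, and each difference is at most `p ν^(-(p+1))`
by convexity of `t ↦ t^(-p)`.
-/

open Real Finset

lemma one_sub_mul_le_one_add_rpow_neg {p t : ℝ} (hp : 0 ≤ p) (ht : -1 < t) :
    1 - p * t ≤ (1 + t) ^ (-p) := by
  have ht1 : 0 < 1 + t := by linarith
  rw [rpow_def_of_pos ht1]
  have hexp := add_one_le_exp (log (1 + t) * -p)
  have hlog : log (1 + t) ≤ t := by linarith [log_le_sub_one_of_pos ht1]
  nlinarith

lemma rpow_neg_sub_rpow_neg_add_one_le {p x : ℝ} (hp : 0 ≤ p) (hx : 0 < x) :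
    x ^ (-p) - (x + 1) ^ (-p) ≤ p * x ^ (-(p + 1)) := by
  have hfactor : (x + 1) ^ (-p) = x ^ (-p) * (1 + x⁻¹) ^ (-p) := by
    rw [← mul_rpow hx.le (by positivity), mul_add, mul_inv_cancel₀ hx.ne', mul_one]
  have hpow : x ^ (-(p + 1)) = x ^ (-p) * x⁻¹ := by
    rw [neg_add, rpow_add hx, rpow_neg_one]
  have hbern := one_sub_mul_le_one_add_rpow_neg hp (by linarith [inv_pos.2 hx] : -1 < x⁻¹)
  rw [hfactor, hpow]
  nlinarith [rpow_pos_of_pos hx (-p)]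

lemma rpow_eq_rpow_neg_mul_mul_rpow {x y : ℝ} (p : ℝ) (hx : 0 < x) (hy : 0 ≤ y) :
    y ^ p = x ^ (-p) * (x * y) ^ p := by
  rw [mul_rpow hx.le hy, ← mul_assoc, ← rpow_add hx, neg_add_cancel, rpow_zero, one_mul]

theorem sum_Icc_by_parts_le {A b c d : ℕ → ℝ} {n M : ℕ} (hnM : n < M)
    (hA : ∀ ν, A (ν + 1) = A ν + b (ν + 1)) (hA0 : ∀ ν, 0 ≤ A ν)
    (hcd : ∀ ν, n < ν → c ν - c (ν + 1) ≤ d ν) :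
    c (n + 1) * A n + ∑ ν ∈ Icc (n + 1) M, c ν * b ν
      ≤ ∑ ν ∈ Ico (n + 1) M, d ν * A ν + c M * A M := by
  induction M, hnM using Nat.le_induction with
  | base => simp [hA, mul_add]
  | succ M hM ih =>
    rw [sum_Icc_succ_top (by omega), sum_Ico_succ_top hM, hA M]
    have hstep := mul_le_mul_of_nonneg_right (hcd M hM) (hA0 M)
    linarith

theorem stmt_17_general {p : ℝ} (hp : 1 ≤ p) (n N : ℕ) (hnN : n < N)
    (a : ℕ → ℝ) (ha : ∀ k, 0 ≤ a k) :
    (1 / ((n : ℝ) + 1) ^ p) * ∑ ν ∈ Finset.Icc 1 n, ((ν : ℝ) * a ν) ^ p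
      + ∑ ν ∈ Finset.Icc (n + 1) N, (a ν) ^ p
    ≤ p * ∑ ν ∈ Finset.Icc n N,
        ((ν : ℝ) ^ (-(p + 1))) * ∑ k ∈ Finset.Icc 1 ν, ((k : ℝ) * a k) ^ p
      + ((N : ℝ) ^ (-p)) * ∑ k ∈ Finset.Icc 1 N, ((k : ℝ) * a k) ^ p := by
  have hp0 : 0 ≤ p := by linarith
  set A : ℕ → ℝ := fun ν => ∑ k ∈ Icc 1 ν, ((k : ℝ) * a k) ^ p
  have hA0 (ν : ℕ) : 0 ≤ A ν := sum_nonneg fun k _ => by have := ha k; positivity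
  have hAsucc (ν : ℕ) : A (ν + 1) = A ν + (((ν + 1 : ℕ) : ℝ) * a (ν + 1)) ^ p :=
    sum_Icc_succ_top (by omega) _
  have hcd (ν : ℕ) (hν : n < ν) :
      (ν : ℝ) ^ (-p) - ((ν + 1 : ℕ) : ℝ) ^ (-p) ≤ p * (ν : ℝ) ^ (-(p + 1)) := by
    push_cast
    exact rpow_neg_sub_rpow_neg_add_one_le hp0 (Nat.cast_pos.2 (by omega))
  calc _ = ((n + 1 : ℕ) : ℝ) ^ (-p) * A n
        + ∑ ν ∈ Icc (n + 1) N, (ν : ℝ) ^ (-p) * ((ν : ℝ) * a ν) ^ p := by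
        have hterm (ν : ℕ) (hν : ν ∈ Icc (n + 1) N) :
            a ν ^ p = (ν : ℝ) ^ (-p) * ((ν : ℝ) * a ν) ^ p :=
          rpow_eq_rpow_neg_mul_mul_rpow p (Nat.cast_pos.2 (by grind)) (ha ν)
        rw [sum_congr rfl hterm]
        push_cast
        rw [one_div, rpow_neg (by positivity)]
    _ ≤ ∑ ν ∈ Ico (n + 1) N, p * (ν : ℝ) ^ (-(p + 1)) * A ν + (N : ℝ) ^ (-p) * A N :=
        sum_Icc_by_parts_le hnN hAsucc hA0 hcd
    _ ≤ ∑ ν ∈ Icc n N, p * (ν : ℝ) ^ (-(p + 1)) * A ν + (N : ℝ) ^ (-p) * A N := by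
        gcongr
        · intro ν _ _
          have := hA0 ν
          positivity
        · exact Ico_subset_Icc_self.trans (Icc_subset_Icc (by omega) le_rfl)
    _ = _ := by simp only [A, mul_sum, mul_assoc]

theorem stmt_17 {p : ℝ} (hp : 1 ≤ p) (n N : ℕ) (hn : 1 ≤ n) (hnN : n < N)
    (a : ℕ → ℝ) (ha : ∀ k, 0 ≤ a k) :
    (1 / ((n : ℝ) + 1) ^ p) * ∑ ν ∈ Finset.Icc 1 n, ((ν : ℝ) * a ν) ^ p
      + ∑ ν ∈ Finset.Icc (n + 1) N, (a ν) ^ p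
    ≤ p * ∑ ν ∈ Finset.Icc n N,
        ((ν : ℝ) ^ (-(p + 1))) * ∑ k ∈ Finset.Icc 1 ν, ((k : ℝ) * a k) ^ p
      + ((N : ℝ) ^ (-p)) * ∑ k ∈ Finset.Icc 1 N, ((k : ℝ) * a k) ^ p :=
  stmt_17_general hp n N hnN a ha
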